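/- arXiv:2512.01175 — 3 statements merged into one kernel-verified Lean document; each statement's English description precedes it below -/
import Mathlib

section
/- Let G be a finite connected chordal graph. Then any two distinct minimal vertex separators of G are disjoint if and only if G contains no induced subgraph isomorphic to the gem and no induced subgraph isomorphic to the dart. -/
/-- A chord of a closed walk: an edge of the graph between two vertices of the walk
that is not an edge of the walk. -/
def SimpleGraph.HasChord {V : Type*} (G : SimpleGraph V) {v : V} (w : G.Walk v v) : Prop :=
  ∃ x y, x ∈ w.support ∧ y ∈ w.support ∧ G.Adj x y ∧ s(x, y) ∉ w.edges

/-- A graph is chordal if every cycle of length at least 4 has a chord. -/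
def SimpleGraph.IsChordal {V : Type*} (G : SimpleGraph V) : Prop :=
  ∀ (v : V) (w : G.Walk v v), w.IsCycle → 4 ≤ w.length → G.HasChord w

/-- `S` is a `uv`-separator: `u, v ∉ S` and every walk from `u` to `v` meets `S`
(equivalently `u` and `v` lie in distinct components of `G - S`). -/
def SimpleGraph.IsUVSeparator {V : Type*} (G : SimpleGraph V) (u v : V) (S : Set V) : Prop :=
  u ∉ S ∧ v ∉ S ∧ ∀ p : G.Walk u v, ∃ x ∈ p.support, x ∈ S

/-- A minimal vertex separator: a `uv`-separator, for some nonadjacent pair `u ≠ v`,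
no proper subset of which is a `uv`-separator. -/
def SimpleGraph.IsMinVtxSep {V : Type*} (G : SimpleGraph V) (S : Set V) : Prop :=
  ∃ u v, u ≠ v ∧ ¬ G.Adj u v ∧ G.IsUVSeparator u v S ∧
    ∀ S' ⊂ S, ¬ G.IsUVSeparator u v S'

/-- The gem graph: a path 0-1-2-3 together with a vertex 4 adjacent to all of 0,1,2,3. -/
def gemGraph : SimpleGraph (Fin 5) :=
  SimpleGraph.fromRel (fun i j =>
    (i.val, j.val) ∈ [(0,1), (1,2), (2,3), (4,0), (4,1), (4,2), (4,3)])

/-- The dart graph on {0,1,2,3,4} = {a,b,c,d,e} with edges ab, ac, bc, bd, cd, ce. -/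
def dartGraph : SimpleGraph (Fin 5) :=
  SimpleGraph.fromRel (fun i j =>
    (i.val, j.val) ∈ [(0,1), (0,2), (1,2), (1,3), (2,3), (2,4)])

/-!
In a gem (a path `a b c d` dominated by `x`) and in a dart (a diamond on `a, b, c, x` with
`a ≁ c`, and a pendant vertex `d` at `x`), `b` and `x` are common neighbours of the nonadjacent
`a` and `c`, and `x` is a common neighbour of the nonadjacent `b` and `d`. So every minimal
`a`–`c` separator contains `b` and `x`, every minimal `b`–`d` separator contains `x` but not `b`,
and two distinct minimal separators meet.

Conversely let `G` be chordal and `S` a minimal `u`–`v` separator: every vertex of `S` has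
neighbours in the components of `u` and of `v` in `G - S`. Shortest paths through one of these
components are chordless, and gluing them into cycles shows that `S` is a clique and that two
vertices of `S` have a common neighbour in each of the two components. Given `x ∈ S₁ ∩ S₂` and
`y ∈ S₂ \ S₁`, `x ∼ y`, and `x` has a neighbour `p` in a component of `G - S₁` (of the two) not
containing `y`, so `p ≁ y` and `p ∉ S₂`. Take common neighbours `z₁, z₂` of `x` and `y` in the
two components of `G - S₂`, `z₁` in one not containing `p`. Then `x, y, p, z₁, z₂` induce a gem
if `p ∼ z₂` and a dart otherwise.
-/

namespace SimpleGraph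

variable {V : Type*} {G : SimpleGraph V} {S S₁ S₂ : Set V} {u v a b c d s t x y z p : V}

namespace Walk

lemma mk_mem_edges_of_length_eq_one : ∀ {p : G.Walk u v}, p.length = 1 → s(u, v) ∈ p.edges
  | cons _ nil, _ => by simp

lemma two_le_length_of_mk_notMem_edges (p : G.Walk u v) (huv : u ≠ v) (h : s(u, v) ∉ p.edges) :
    2 ≤ p.length := by
  match p with
  | nil => exact absurd rfl huv
  | cons _ nil => simp at h
  | cons _ (cons _ _) => simp

lemma IsPath.ne_of_mem_support_tail {p : G.Walk u v} (hp : p.IsPath) (hx : x ∈ p.support.tail) :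
    x ≠ u := by
  rintro rfl
  exact (List.nodup_cons.1 (p.cons_tail_support ▸ hp.support_nodup)).1 hx

lemma exists_isSubwalk_of_mem_support {p : G.Walk u v} (hx : x ∈ p.support)
    (hy : y ∈ p.support) :
    (∃ q : G.Walk x y, q.IsSubwalk p) ∨ ∃ q : G.Walk y x, q.IsSubwalk p := by
  classical
  rw [← p.take_spec hx, mem_support_append_iff] at hy
  rcases hy with hy | hy
  · exact .inr ⟨_, (isSubwalk_dropUntil _ hy).trans (isSubwalk_takeUntil p hx)⟩
  · exact .inl ⟨_, (isSubwalk_takeUntil _ hy).trans (isSubwalk_dropUntil p hx)⟩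

theorem isChordless_of_length_eq_dist {p : G.Walk u v} (hp : p.length = G.dist u v) :
    p.IsChordless := by
  refine isChordless_iff_forall_mem_edges.2 fun x y hx hy hxy => ?_
  rcases exists_isSubwalk_of_mem_support hx hy with ⟨q, hq⟩ | ⟨q, hq⟩
  · refine hq.edges_subset (mk_mem_edges_of_length_eq_one ?_)
    rw [length_eq_dist_of_subwalk hp hq, dist_eq_one_iff_adj.2 hxy]
  · rw [Sym2.eq_swap]
    refine hq.edges_subset (mk_mem_edges_of_length_eq_one ?_)
    rw [length_eq_dist_of_subwalk hp hq, dist_eq_one_iff_adj.2 hxy.symm]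

theorem exists_isPath_forall_isChord_eq (w : G.Walk u v) (hw : s(u, v) ∉ w.edges) :
    ∃ p : G.Walk u v, p.IsPath ∧ s(u, v) ∉ p.edges ∧ p.support ⊆ w.support ∧
      ∀ e, p.IsChord e → e = s(u, v) := by
  -- A shortest walk in `H` (the vertices of `w`, without the edge `uv`) is chordless there.
  let H : SimpleGraph V :=
    { Adj a b := G.Adj a b ∧ a ∈ w.support ∧ b ∈ w.support ∧ s(a, b) ≠ s(u, v)
      symm := ⟨fun a b h => ⟨h.1.symm, h.2.2.1, h.2.1, Sym2.eq_swap (a := b) ▸ h.2.2.2⟩⟩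
      loopless := ⟨fun a h => G.irrefl h.1⟩ }
  have hH : ∀ {a b}, H.Adj a b ↔
      G.Adj a b ∧ a ∈ w.support ∧ b ∈ w.support ∧ s(a, b) ≠ s(u, v) := Iff.rfl
  have hHG : H ≤ G := fun a b h => (hH.1 h).1
  have hwH : ∀ e ∈ w.edges, e ∈ H.edgeSet := by
    intro e he
    induction e with
    | h a b => exact hH.2 ⟨w.adj_of_mem_edges he, w.fst_mem_support_of_mem_edges he,
        w.snd_mem_support_of_mem_edges he, fun h => hw (h ▸ he)⟩
  obtain ⟨q, hq⟩ := (w.transfer H hwH).reachable.exists_walk_length_eq_dist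
  have hqw : q.support ⊆ w.support := by
    intro z hz
    rw [← cons_tail_support, List.mem_cons, ← map_snd_darts, List.mem_map] at hz
    obtain rfl | ⟨d, -, rfl⟩ := hz
    · exact w.start_mem_support
    · exact (hH.1 d.adj).2.2.1
  refine ⟨q.mapLe hHG, (q.isPath_of_length_eq_dist hq).mapLe hHG, ?_, ?_, ?_⟩
  · rw [edges_mapLe_eq_edges]
    exact fun h => (hH.1 (q.edges_subset_edgeSet h)).2.2.2 rfl
  · rwa [support_mapLe_eq_support]
  · intro e he
    induction e with
    | h x y =>
      rw [isChord_sym2Mk, support_mapLe_eq_support, edges_mapLe_eq_edges] at he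
      by_contra hne
      exact he.2.1 ((isChordless_of_length_eq_dist hq).mem_edges he.2.2.1 he.2.2.2
        (hH.2 ⟨he.1, hqw he.2.2.1, hqw he.2.2.2, hne⟩))

theorem exists_isPath_isChordless_of_not_adj (w : G.Walk u v) (huv : u ≠ v)
    (hnuv : ¬ G.Adj u v) {A : Set V} (hw : ∀ z ∈ w.support, z ≠ u → z ≠ v → z ∈ A) :
    ∃ p : G.Walk u v, p.IsPath ∧ p.IsChordless ∧ 2 ≤ p.length ∧
      ∀ z ∈ p.support, z ≠ u → z ≠ v → z ∈ A := by
  have hnot : ∀ w : G.Walk u v, s(u, v) ∉ w.edges := fun w h => hnuv (w.adj_of_mem_edges h)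
  obtain ⟨p, hp, -, hpw, hpc⟩ := w.exists_isPath_forall_isChord_eq (hnot w)
  exact ⟨p, hp, fun e he => hnuv (G.mem_edgeSet.1 (hpc e he ▸ he.1)),
    p.two_le_length_of_mk_notMem_edges huv (hnot p), fun z hz => hw z (hpw hz)⟩

end Walk

namespace IsChordal

open Walk

theorem exists_adj_adj_mem_support (hG : G.IsChordal) (hxy : G.Adj x y) (w : G.Walk x y)
    (hw : s(x, y) ∉ w.edges) : ∃ z ∈ w.support, G.Adj x z ∧ G.Adj z y := by
  obtain ⟨p, hp, hpxy, hpw, hpc⟩ := w.exists_isPath_forall_isChord_eq hw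
  -- A longer `p` would close, with the edge `yx`, a chordless cycle of length at least 4.
  have hlen : p.length = 2 := by
    refine (p.two_le_length_of_mk_notMem_edges hxy.ne hpxy).antisymm' (not_lt.1 fun h3 => ?_)
    have hcyc : (cons hxy.symm p).IsCycle :=
      (cons_isCycle_iff p hxy.symm).2 ⟨hp, by rwa [Sym2.eq_swap]⟩
    obtain ⟨a, b, ha, hb, hab, habc⟩ := hG y _ hcyc (by simp only [length_cons]; omega)
    have hmem : ∀ {z}, z ∈ (cons hxy.symm p).support → z ∈ p.support := fun hz =>
      (List.mem_cons.1 hz).elim (· ▸ p.end_mem_support) id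
    rw [edges_cons, List.mem_cons, Sym2.eq_swap (a := y), not_or] at habc
    exact habc.1 (hpc _ (isChord_sym2Mk.2 ⟨hab, habc.2, hmem ha, hmem hb⟩))
  refine ⟨p.getVert 1, hpw (p.getVert_mem_support 1), ?_, ?_⟩
  · simpa using p.adj_getVert_succ (i := 0) (by omega)
  · have h := p.adj_getVert_succ (i := 1) (by omega)
    rwa [show 1 + 1 = p.length by omega, getVert_length] at h

theorem adj_of_walks_through_separated (hG : G.IsChordal) (hst : s ≠ t) {A B : Set V}
    (hAB : ∀ a ∈ A, ∀ b ∈ B, a ≠ b ∧ ¬ G.Adj a b) (w₁ w₂ : G.Walk s t)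
    (h₁ : ∀ z ∈ w₁.support, z ≠ s → z ≠ t → z ∈ A)
    (h₂ : ∀ z ∈ w₂.support, z ≠ s → z ≠ t → z ∈ B) : G.Adj s t := by
  by_contra hnst
  obtain ⟨p, hp, hpc, hp2, hA⟩ := w₁.exists_isPath_isChordless_of_not_adj hst hnst h₁
  obtain ⟨q, hq, hqc, hq2, hB⟩ := w₂.exists_isPath_isChordless_of_not_adj hst hnst h₂
  have hdisj : p.support.tail.Disjoint q.reverse.support.tail := by
    intro z hzp hzq
    have hzs := hp.ne_of_mem_support_tail hzp
    have hzt := hq.reverse.ne_of_mem_support_tail hzq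
    rw [support_reverse] at hzq
    exact (hAB z (hA z (List.mem_of_mem_tail hzp) hzs hzt) z
      (hB z (List.mem_reverse.1 (List.mem_of_mem_tail hzq)) hzs hzt)).1 rfl
  have hcyc : (p.append q.reverse).IsCycle := hp.isCycle_append hq.reverse hdisj (.inl hp2)
  obtain ⟨a, b, ha, hb, hab, habc⟩ :=
    hG s _ hcyc (by simp only [length_append, length_reverse]; omega)
  simp only [mem_support_append_iff, support_reverse, List.mem_reverse, edges_append,
    edges_reverse, List.mem_append, not_or] at ha hb habc
  have hcross : ∀ {a b}, a ∈ p.support → a ∉ q.support → b ∈ q.support → b ∉ p.support →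
      ¬ G.Adj a b := fun ha haq hb hbp =>
    (hAB _ (hA _ ha (ne_of_mem_of_not_mem q.start_mem_support haq).symm
      (ne_of_mem_of_not_mem q.end_mem_support haq).symm) _
      (hB _ hb (ne_of_mem_of_not_mem p.start_mem_support hbp).symm
      (ne_of_mem_of_not_mem p.end_mem_support hbp).symm)).2
  have hnp : ¬ (a ∈ p.support ∧ b ∈ p.support) := fun h => habc.1 (hpc.mem_edges h.1 h.2 hab)
  have hnq : ¬ (a ∈ q.support ∧ b ∈ q.support) := fun h => habc.2 (hqc.mem_edges h.1 h.2 hab)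
  -- The chord `ab` of `p ++ q⁻¹` must join `p` minus `q` to `q` minus `p`, i.e. `A` to `B`.
  have := @hcross a b
  have := @hcross b a
  have := hab.symm
  tauto

end IsChordal

def ReachableAvoiding (G : SimpleGraph V) (S : Set V) (u v : V) : Prop :=
  ∃ p : G.Walk u v, ∀ z ∈ p.support, z ∉ S

namespace ReachableAvoiding

lemma refl (hu : u ∉ S) : G.ReachableAvoiding S u u :=
  ⟨.nil, by simpa using hu⟩

lemma notMem (h : G.ReachableAvoiding S u v) : v ∉ S :=
  h.elim fun p hp => hp v p.end_mem_support

lemma symm (h : G.ReachableAvoiding S u v) : G.ReachableAvoiding S v u :=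
  h.elim fun p hp => ⟨p.reverse, fun z hz => hp z (by simpa using hz)⟩

lemma trans (h₁ : G.ReachableAvoiding S u v) (h₂ : G.ReachableAvoiding S v z) :
    G.ReachableAvoiding S u z := by
  obtain ⟨p, hp⟩ := h₁
  obtain ⟨q, hq⟩ := h₂
  refine ⟨p.append q, fun z hz => ?_⟩
  rcases (Walk.mem_support_append_iff p q).1 hz with hz | hz
  exacts [hp z hz, hq z hz]

lemma trans_adj (h : G.ReachableAvoiding S u v) (hvz : G.Adj v z) (hz : z ∉ S) :
    G.ReachableAvoiding S u z :=
  h.trans ⟨hvz.toWalk, by simp [h.notMem, hz]⟩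

lemma exists_walk (ha : G.ReachableAvoiding S u a) (hb : G.ReachableAvoiding S u b) :
    ∃ p : G.Walk a b, ∀ z ∈ p.support, G.ReachableAvoiding S u z := by
  classical
  obtain ⟨p, hp⟩ := ha.symm.trans hb
  exact ⟨p, fun z hz => ha.trans
    ⟨p.takeUntil z hz, fun w hw => hp w (p.support_takeUntil_subset_support hz hw)⟩⟩

end ReachableAvoiding

lemma isUVSeparator_comm : G.IsUVSeparator u v = G.IsUVSeparator v u := by
  ext S
  refine ⟨fun h => ⟨h.2.1, h.1, fun p => ?_⟩, fun h => ⟨h.2.1, h.1, fun p => ?_⟩⟩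
  · simpa using h.2.2 p.reverse
  · simpa using h.2.2 p.reverse

lemma isMinVtxSep_iff : G.IsMinVtxSep S ↔
    ∃ u v, u ≠ v ∧ ¬ G.Adj u v ∧ Minimal (G.IsUVSeparator u v) S := by
  simp only [IsMinVtxSep, Set.minimal_iff_forall_ssubset]

namespace IsUVSeparator

lemma not_reachableAvoiding (hS : G.IsUVSeparator u v S) : ¬ G.ReachableAvoiding S u v :=
  fun ⟨p, hp⟩ => (hS.2.2 p).elim fun z hz => hp z hz.1 hz.2

lemma not_reachableAvoiding_both (hS : G.IsUVSeparator u v S)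
    (hu : G.ReachableAvoiding S u z) (hv : G.ReachableAvoiding S v z) : False :=
  hS.not_reachableAvoiding (hu.trans hv.symm)

lemma not_adj_of_reachableAvoiding (hS : G.IsUVSeparator u v S)
    (ha : G.ReachableAvoiding S u a) (hb : G.ReachableAvoiding S v b) : ¬ G.Adj a b :=
  fun hab => hS.not_reachableAvoiding_both (ha.trans_adj hab hb.notMem) hb

lemma mem_of_adj_of_adj (hS : G.IsUVSeparator u v S) (hux : G.Adj u x) (hxv : G.Adj x v) :
    x ∈ S := by
  obtain ⟨z, hz, hzS⟩ := hS.2.2 (.cons hux (.cons hxv .nil))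
  simp only [Walk.support_cons, Walk.support_nil, List.mem_cons, List.not_mem_nil,
    or_false] at hz
  rcases hz with rfl | rfl | rfl
  exacts [absurd hzS hS.1, hzS, absurd hzS hS.2.1]

end IsUVSeparator

lemma exists_minimal_isUVSeparator [Finite V] (huv : u ≠ v) (hnuv : ¬ G.Adj u v) :
    ∃ S, Minimal (G.IsUVSeparator u v) S := by
  have hN : G.IsUVSeparator u v (G.neighborSet u) := by
    refine ⟨G.irrefl, hnuv, fun q => ?_⟩
    cases q with
    | nil => exact absurd rfl huv
    | cons h q => exact ⟨_, List.mem_cons_of_mem _ q.start_mem_support, h⟩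
  obtain ⟨S, -, hS⟩ := exists_minimal_le_of_wellFoundedLT _ _ hN
  exact ⟨S, hS⟩

lemma minimal_isUVSeparator_comm :
    Minimal (G.IsUVSeparator u v) S ↔ Minimal (G.IsUVSeparator v u) S := by
  rw [isUVSeparator_comm]

lemma exists_adj_reachableAvoiding_of_mem (hS : Minimal (G.IsUVSeparator u v) S) (hs : s ∈ S) :
    ∃ z, G.ReachableAvoiding S u z ∧ G.Adj s z := by
  have hns := hS.not_prop_of_ssubset (Set.sdiff_singleton_ssubset.2 hs)
  simp only [IsUVSeparator, not_and, not_forall, not_exists] at hns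
  obtain ⟨p, hp⟩ := hns (fun h => hS.prop.1 h.1) (fun h => hS.prop.2.1 h.1)
  obtain ⟨d, hd, hfst, hsnd⟩ := p.exists_boundary_dart {z | G.ReachableAvoiding S u z}
    (.refl hS.prop.1) hS.prop.not_reachableAvoiding
  have hdS : d.snd ∈ S := by_contra fun h => hsnd (hfst.trans_adj d.adj h)
  have hds : d.snd = s :=
    by_contra fun h => hp _ (p.dart_snd_mem_support_of_mem_darts hd) ⟨hdS, h⟩
  exact ⟨d.fst, hfst, hds ▸ d.adj.symm⟩

lemma exists_walk_via_reachableAvoiding (hS : Minimal (G.IsUVSeparator u v) S) (hs : s ∈ S)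
    (ht : t ∈ S) : ∃ w : G.Walk s t, s(s, t) ∉ w.edges ∧
      ∀ z ∈ w.support, z ≠ s → z ≠ t → G.ReachableAvoiding S u z := by
  obtain ⟨a, ha, hsa⟩ := exists_adj_reachableAvoiding_of_mem hS hs
  obtain ⟨b, hb, htb⟩ := exists_adj_reachableAvoiding_of_mem hS ht
  obtain ⟨m, hm⟩ := ha.exists_walk hb
  refine ⟨.cons hsa (m.concat htb.symm), ?_, fun z hz hzs hzt => ?_⟩
  · have haS := ha.notMem
    have hbS := hb.notMem
    have hst : s(s, t) ∉ m.edges := fun h => (hm s (m.fst_mem_support_of_mem_edges h)).notMem hs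
    simp only [Walk.edges_cons, Walk.edges_concat, List.concat_eq_append, List.mem_cons,
      List.mem_append, List.not_mem_nil, or_false, not_or, Sym2.eq_iff]
    grind
  · simp only [Walk.support_cons, Walk.support_concat, List.mem_cons, List.mem_append,
      List.not_mem_nil, or_false] at hz
    exact hm z ((hz.resolve_left hzs).resolve_right hzt)

lemma exists_adj_not_adj_of_mem_of_notMem (hS : Minimal (G.IsUVSeparator u v) S) (hx : x ∈ S)
    (hy : y ∉ S) : ∃ p, G.Adj x p ∧ ¬ G.Adj y p ∧ y ≠ p := by
  suffices ∃ w p, G.ReachableAvoiding S w p ∧ ¬ G.ReachableAvoiding S w y ∧ G.Adj x p by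
    obtain ⟨w, p, hwp, hwy, hxp⟩ := this
    exact ⟨p, hxp, fun h => hwy (hwp.trans_adj h.symm hy), fun h => hwy (h ▸ hwp)⟩
  obtain ⟨p, hup, hxp⟩ := exists_adj_reachableAvoiding_of_mem hS hx
  obtain ⟨q, hvq, hxq⟩ := exists_adj_reachableAvoiding_of_mem (minimal_isUVSeparator_comm.1 hS) hx
  by_cases huy : G.ReachableAvoiding S u y
  · exact ⟨v, q, hvq, hS.prop.not_reachableAvoiding_both huy, hxq⟩
  · exact ⟨u, p, hup, huy, hxp⟩

lemma exists_ne_not_disjoint_of_adj [Finite V] (hac : a ≠ c) (hnac : ¬ G.Adj a c)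
    (hbd : b ≠ d) (hnbd : ¬ G.Adj b d) (hab : G.Adj a b) (hbc : G.Adj b c)
    (hax : G.Adj a x) (hxc : G.Adj x c) (hbx : G.Adj b x) (hxd : G.Adj x d) :
    ∃ S S', G.IsMinVtxSep S ∧ G.IsMinVtxSep S' ∧ S ≠ S' ∧ ¬ Disjoint S S' := by
  obtain ⟨S, hS⟩ := exists_minimal_isUVSeparator hac hnac
  obtain ⟨S', hS'⟩ := exists_minimal_isUVSeparator hbd hnbd
  refine ⟨S, S', isMinVtxSep_iff.2 ⟨a, c, hac, hnac, hS⟩, isMinVtxSep_iff.2 ⟨b, d, hbd, hnbd, hS'⟩,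
    fun h => hS'.prop.1 (h ▸ hS.prop.mem_of_adj_of_adj hab hbc), ?_⟩
  exact Set.not_disjoint_iff.2
    ⟨x, hS.prop.mem_of_adj_of_adj hax hxc, hS'.prop.mem_of_adj_of_adj hbx hxd⟩

lemma exists_ne_not_disjoint_of_gem [Finite V] (f : gemGraph ↪g G) :
    ∃ S S', G.IsMinVtxSep S ∧ G.IsMinVtxSep S' ∧ S ≠ S' ∧ ¬ Disjoint S S' := by
  refine exists_ne_not_disjoint_of_adj (a := f 0) (b := f 1) (c := f 2) (d := f 3) (x := f 4)
    ?_ ?_ ?_ ?_ ?_ ?_ ?_ ?_ ?_ ?_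
  all_goals simp only [Ne, f.map_adj_iff, f.injective.eq_iff]; simp [gemGraph]

lemma exists_ne_not_disjoint_of_dart [Finite V] (f : dartGraph ↪g G) :
    ∃ S S', G.IsMinVtxSep S ∧ G.IsMinVtxSep S' ∧ S ≠ S' ∧ ¬ Disjoint S S' := by
  refine exists_ne_not_disjoint_of_adj (a := f 0) (b := f 1) (c := f 3) (d := f 4) (x := f 2)
    ?_ ?_ ?_ ?_ ?_ ?_ ?_ ?_ ?_ ?_
  all_goals simp only [Ne, f.map_adj_iff, f.injective.eq_iff]; simp [dartGraph]

lemma nonempty_gem_or_dart_embedding {z₁ z₂ : V} (hxy : G.Adj x y) (hxp : G.Adj x p)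
    (hxz₁ : G.Adj x z₁) (hz₁y : G.Adj z₁ y) (hxz₂ : G.Adj x z₂) (hz₂y : G.Adj z₂ y)
    (hyp : ¬ G.Adj y p) (hz₁z₂ : ¬ G.Adj z₁ z₂) (hpz₁ : ¬ G.Adj p z₁)
    (hyp' : y ≠ p) (hz₁z₂' : z₁ ≠ z₂) (hpz₁' : p ≠ z₁) :
    Nonempty (gemGraph ↪g G) ∨ Nonempty (dartGraph ↪g G) := by
  have := hxy.ne; have := hxp.ne; have := hxz₁.ne
  have := hxz₂.ne; have := hz₁y.ne; have := hz₂y.ne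
  have hpz₂ : p ≠ z₂ := fun h => hyp (h ▸ hz₂y.symm)
  by_cases hz₂p : G.Adj z₂ p
  · -- the path `z₁ y z₂ p` dominated by `x`
    have hinj : Function.Injective ![z₁, y, z₂, p, x] := List.nodup_ofFn.1 (by simp_all [eq_comm])
    refine .inl ⟨⟨⟨_, hinj⟩, @fun i j => ?_⟩⟩
    fin_cases i <;> fin_cases j <;> simp_all [gemGraph, G.adj_comm]
  · -- the diamond `z₁ y x z₂` with `p` pendant at `x`
    have hinj : Function.Injective ![z₁, y, x, z₂, p] := List.nodup_ofFn.1 (by simp_all [eq_comm])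
    refine .inr ⟨⟨⟨_, hinj⟩, @fun i j => ?_⟩⟩
    fin_cases i <;> fin_cases j <;> simp_all [dartGraph, G.adj_comm]

namespace IsChordal

theorem adj_of_mem_minimal (hG : G.IsChordal) (hS : Minimal (G.IsUVSeparator u v) S)
    (hx : x ∈ S) (hy : y ∈ S) (hxy : x ≠ y) : G.Adj x y := by
  obtain ⟨w₁, -, hw₁⟩ := exists_walk_via_reachableAvoiding hS hx hy
  obtain ⟨w₂, -, hw₂⟩ := exists_walk_via_reachableAvoiding (minimal_isUVSeparator_comm.1 hS) hx hy
  refine hG.adj_of_walks_through_separated hxy (fun a ha b hb => ⟨?_, ?_⟩) w₁ w₂ hw₁ hw₂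
  · rintro rfl
    exact hS.prop.not_reachableAvoiding_both ha hb
  · exact hS.prop.not_adj_of_reachableAvoiding ha hb

theorem exists_adj_adj_reachableAvoiding (hG : G.IsChordal)
    (hS : Minimal (G.IsUVSeparator u v) S) (hx : x ∈ S) (hy : y ∈ S) (hxy : G.Adj x y) :
    ∃ z, G.ReachableAvoiding S u z ∧ G.Adj x z ∧ G.Adj z y := by
  obtain ⟨w, hw, hwu⟩ := exists_walk_via_reachableAvoiding hS hx hy
  obtain ⟨z, hz, hxz, hzy⟩ := hG.exists_adj_adj_mem_support hxy w hw
  exact ⟨z, hwu z hz hxz.ne' hzy.ne, hxz, hzy⟩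

theorem exists_common_adj_not_adj (hG : G.IsChordal) (hS : Minimal (G.IsUVSeparator u v) S)
    (hx : x ∈ S) (hy : y ∈ S) (hxy : G.Adj x y) (hp : p ∉ S)
    (hup : ¬ G.ReachableAvoiding S u p) :
    ∃ z₁ z₂, G.Adj x z₁ ∧ G.Adj z₁ y ∧ G.Adj x z₂ ∧ G.Adj z₂ y ∧
      ¬ G.Adj z₁ z₂ ∧ ¬ G.Adj p z₁ ∧ z₁ ≠ z₂ ∧ p ≠ z₁ := by
  obtain ⟨z₁, hz₁, hxz₁, hz₁y⟩ := hG.exists_adj_adj_reachableAvoiding hS hx hy hxy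
  obtain ⟨z₂, hz₂, hxz₂, hz₂y⟩ :=
    hG.exists_adj_adj_reachableAvoiding (minimal_isUVSeparator_comm.1 hS) hx hy hxy
  refine ⟨z₁, z₂, hxz₁, hz₁y, hxz₂, hz₂y, hS.prop.not_adj_of_reachableAvoiding hz₁ hz₂,
    fun h => hup (hz₁.trans_adj h.symm hp), ?_, fun h => hup (h ▸ hz₁)⟩
  rintro rfl
  exact hS.prop.not_reachableAvoiding_both hz₁ hz₂

theorem nonempty_gem_or_dart_of_mem_sdiff (hG : G.IsChordal) (hS₁ : G.IsMinVtxSep S₁)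
    (hS₂ : G.IsMinVtxSep S₂) (hx₁ : x ∈ S₁) (hx₂ : x ∈ S₂) (hy₂ : y ∈ S₂) (hy₁ : y ∉ S₁) :
    Nonempty (gemGraph ↪g G) ∨ Nonempty (dartGraph ↪g G) := by
  obtain ⟨a, b, -, -, hS₁⟩ := isMinVtxSep_iff.1 hS₁
  obtain ⟨u, v, -, -, hS₂⟩ := isMinVtxSep_iff.1 hS₂
  have hxy := hG.adj_of_mem_minimal hS₂ hx₂ hy₂ (ne_of_mem_of_not_mem hx₁ hy₁)
  obtain ⟨p, hxp, hyp, hyp'⟩ := exists_adj_not_adj_of_mem_of_notMem hS₁ hx₁ hy₁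
  have hp : p ∉ S₂ := fun hp => hyp (hG.adj_of_mem_minimal hS₂ hy₂ hp hyp')
  -- `p` lies on at most one side of `S₂`; `z₁` is taken on another one.
  obtain ⟨z₁, z₂, h⟩ : ∃ z₁ z₂, G.Adj x z₁ ∧ G.Adj z₁ y ∧ G.Adj x z₂ ∧ G.Adj z₂ y ∧
      ¬ G.Adj z₁ z₂ ∧ ¬ G.Adj p z₁ ∧ z₁ ≠ z₂ ∧ p ≠ z₁ := by
    by_cases hup : G.ReachableAvoiding S₂ u p
    · exact hG.exists_common_adj_not_adj (minimal_isUVSeparator_comm.1 hS₂) hx₂ hy₂ hxy hp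
        (hS₂.prop.not_reachableAvoiding_both hup)
    · exact hG.exists_common_adj_not_adj hS₂ hx₂ hy₂ hxy hp hup
  obtain ⟨hxz₁, hz₁y, hxz₂, hz₂y, hz₁z₂, hpz₁, hz₁z₂', hpz₁'⟩ := h
  exact nonempty_gem_or_dart_embedding hxy hxp hxz₁ hz₁y hxz₂ hz₂y hyp hz₁z₂ hpz₁ hyp' hz₁z₂'
    hpz₁'

end IsChordal

end SimpleGraph

theorem strictly_chordal_iff_gem_dart_free_general {V : Type*} [Fintype V] (G : SimpleGraph V)
    (hchordal : G.IsChordal) :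
    (∀ S S' : Set V, G.IsMinVtxSep S → G.IsMinVtxSep S' → S ≠ S' → Disjoint S S') ↔
      (IsEmpty (gemGraph ↪g G) ∧ IsEmpty (dartGraph ↪g G)) := by
  rw [← not_nonempty_iff, ← not_nonempty_iff, ← not_or]
  constructor
  · rintro hdisj (hgem | hdart)
    · obtain ⟨f⟩ := hgem
      obtain ⟨S, S', hS, hS', hne, hSS'⟩ := SimpleGraph.exists_ne_not_disjoint_of_gem f
      exact hSS' (hdisj S S' hS hS' hne)
    · obtain ⟨f⟩ := hdart
      obtain ⟨S, S', hS, hS', hne, hSS'⟩ := SimpleGraph.exists_ne_not_disjoint_of_dart f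
      exact hSS' (hdisj S S' hS hS' hne)
  · intro hfree S S' hS hS' hne
    refine Set.disjoint_left.2 fun x hx hx' => hfree ?_
    obtain ⟨y, hy', hy⟩ | ⟨y, hy, hy'⟩ : (S' \ S).Nonempty ∨ (S \ S').Nonempty := by
      simp only [Set.nonempty_iff_ne_empty, Ne, Set.sdiff_eq_empty, ← not_and_or]
      exact fun h => hne (h.2.antisymm h.1)
    · exact hchordal.nonempty_gem_or_dart_of_mem_sdiff hS hS' hx hx' hy' hy
    · exact hchordal.nonempty_gem_or_dart_of_mem_sdiff hS' hS hx' hx hy hy'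

/-- For a finite connected chordal graph, any two distinct minimal vertex separators are
disjoint iff the graph has no induced subgraph isomorphic to the gem or to the dart. -/
theorem strictly_chordal_iff_gem_dart_free {V : Type*} [Fintype V] (G : SimpleGraph V)
    (hconn : G.Connected) (hchordal : G.IsChordal) :
    (∀ S S' : Set V, G.IsMinVtxSep S → G.IsMinVtxSep S' → S ≠ S' → Disjoint S S') ↔
      (IsEmpty (gemGraph ↪g G) ∧ IsEmpty (dartGraph ↪g G)) :=
  strictly_chordal_iff_gem_dart_free_general G hchordal
end

section
/- Let G be a finite connected strictly chordal graph and let S be a minimal vertex separator of G. Then S is a minimal separator of the whole graph G: the graph G − S is disconnected, and G − S′ is connected for every proper subset S′ of S. -/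
/-- A graph is strictly chordal if it is chordal and any two distinct minimal vertex
separators are disjoint. -/
def SimpleGraph.IsStrictlyChordal {V : Type*} (G : SimpleGraph V) : Prop :=
  G.IsChordal ∧
    ∀ S S' : Set V, G.IsMinVtxSep S → G.IsMinVtxSep S' → S ≠ S' → Disjoint S S'

/-!
If `G - S'` were disconnected for some `S' ⊂ S`, two vertices in different components of
`G - S'` would be separated by `S'`, hence (as `S'` is finite) by a minimal vertex separator
`T ⊆ S'`. Since `G` is connected, `T` is nonempty, so the minimal vertex separators `T` and `S`
meet; strict chordality then forces `T = S`, which is impossible as `T ⊆ S' ⊂ S`.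
-/

namespace SimpleGraph

variable {V : Type*} {G : SimpleGraph V} {S T : Set V} {u v : V}

lemma isUVSeparator_iff_not_reachable_induce_compl (hu : u ∉ S) (hv : v ∉ S) :
    G.IsUVSeparator u v S ↔ ¬ (G.induce Sᶜ).Reachable ⟨u, hu⟩ ⟨v, hv⟩ := by
  refine ⟨fun hsep ⟨q⟩ => ?_, fun hr => ⟨hu, hv, fun p => ?_⟩⟩
  · obtain ⟨x, hx, hxS⟩ := hsep.2.2 (q.map (Embedding.induce Sᶜ).toHom)
    replace hx : x ∈ q.support.map (Embedding.induce (G := G) Sᶜ).toHom := by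
      rwa [← Walk.support_map]
    obtain ⟨y, -, rfl⟩ := List.mem_map.mp hx
    exact y.2 hxS
  · by_contra! hp
    exact hr ⟨p.induce Sᶜ hp⟩

lemma IsUVSeparator.not_connected_induce_compl (h : G.IsUVSeparator u v S) :
    ¬ (G.induce Sᶜ).Connected := fun hc =>
  (isUVSeparator_iff_not_reachable_induce_compl h.1 h.2.1).mp h (hc.preconnected _ _)

lemma IsUVSeparator.nonempty (h : G.IsUVSeparator u v S) (huv : G.Reachable u v) :
    S.Nonempty := by
  obtain ⟨p⟩ := huv
  obtain ⟨x, -, hx⟩ := h.2.2 p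
  exact ⟨x, hx⟩

lemma exists_isUVSeparator_of_not_connected_induce_compl (hS : (Sᶜ).Nonempty)
    (h : ¬ (G.induce Sᶜ).Connected) :
    ∃ a b, a ≠ b ∧ ¬ G.Adj a b ∧ G.IsUVSeparator a b S := by
  have : Nonempty (Sᶜ : Set V) := hS.to_subtype
  obtain ⟨a, b, hab⟩ : ∃ a b : ↥Sᶜ, ¬ (G.induce Sᶜ).Reachable a b := by
    by_contra! hr
    exact h ⟨hr⟩
  refine ⟨a, b, fun h => hab (by rw [Subtype.ext h]), fun hadj => hab ?_,
    (isUVSeparator_iff_not_reachable_induce_compl a.2 b.2).mpr hab⟩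
  exact (induce_adj.mpr hadj).reachable

lemma IsUVSeparator.exists_isMinVtxSep_subset (h : G.IsUVSeparator u v S) (hS : S.Finite)
    (huv : u ≠ v) (hadj : ¬ G.Adj u v) :
    ∃ T ⊆ S, G.IsMinVtxSep T ∧ G.IsUVSeparator u v T := by
  obtain ⟨T, ⟨hTS, hT⟩, hTmin⟩ := (hS.finite_subsets.subset fun T hT => hT.1).exists_minimal
    (s := {T | T ⊆ S ∧ G.IsUVSeparator u v T}) ⟨S, subset_rfl, h⟩
  refine ⟨T, hTS, ⟨u, v, huv, hadj, hT, fun T' hT' hsep => ?_⟩, hT⟩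
  exact hT'.not_subset (hTmin ⟨hT'.subset.trans hTS, hsep⟩ hT'.subset)

lemma IsStrictlyChordal.eq_of_isMinVtxSep_of_subset (hG : G.IsStrictlyChordal)
    (hS : G.IsMinVtxSep S) (hT : G.IsMinVtxSep T) (hne : T.Nonempty) (hTS : T ⊆ S) :
    T = S := by
  by_contra hne'
  obtain ⟨x, hx⟩ := hne
  exact (hG.2 T S hT hS hne').ne_of_mem hx (hTS hx) rfl

end SimpleGraph

/-- Every minimal vertex separator `S` of a finite connected strictly chordal graph is a
minimal separator of the whole graph: `G - S` is disconnected and `G - S'` is connected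
for every proper subset `S'` of `S`. -/
theorem minVtxSep_is_minimal_separator {V : Type*} [Fintype V] (G : SimpleGraph V)
    (hconn : G.Connected) (hsc : G.IsStrictlyChordal) (S : Set V) (hS : G.IsMinVtxSep S) :
    ¬ (SimpleGraph.induce Sᶜ G).Connected ∧
      ∀ S' ⊂ S, (SimpleGraph.induce S'ᶜ G).Connected := by
  have ⟨u, v, _, _, huvS, _⟩ := hS
  refine ⟨huvS.not_connected_induce_compl, fun S' hS' => ?_⟩
  by_contra hdisc
  obtain ⟨a, b, hab, hadj, habS'⟩ := SimpleGraph.exists_isUVSeparator_of_not_connected_induce_compl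
    ⟨u, fun hu => huvS.1 (hS'.1 hu)⟩ hdisc
  obtain ⟨T, hTS', hT, habT⟩ := habS'.exists_isMinVtxSep_subset S'.toFinite hab hadj
  have hTS : T = S := hsc.eq_of_isMinVtxSep_of_subset hS hT
    (habT.nonempty (hconn.preconnected a b)) (hTS'.trans hS'.1)
  exact hS'.2 (hTS ▸ hTS')
end

section
/- Let G be a finite connected non-complete strictly interval graph. Then every maximal clique Q of G contains at most two minimal vertex separators of G, i.e., the number of minimal vertex separators S of G with S ⊆ Q is at most 2. -/
/-- An interval graph. -/
def SimpleGraph.IsIntervalGraph {V : Type*} (G : SimpleGraph V) : Prop :=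
  ∃ a b : V → ℝ, (∀ v, a v ≤ b v) ∧
    ∀ u v : V, u ≠ v →
      (G.Adj u v ↔ (Set.Icc (a u) (b u) ∩ Set.Icc (a v) (b v)).Nonempty)

/-- A maximal clique. -/
def SimpleGraph.IsMaxClique {V : Type*} (G : SimpleGraph V) (Q : Set V) : Prop :=
  G.IsClique Q ∧ ∀ Q' : Set V, G.IsClique Q' → Q ⊆ Q' → Q' = Q

/-!
Represent `G` by intervals `[a x, b x]`; a maximal clique `Q` is then the set of intervals
through one point `p`. A minimal separator `S` has two full components in `G - S`, and at most
one of them meets the clique `Q`; the other is connected and avoids `p`, so it lies entirely to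
the left or entirely to the right of `p`. Suppose two disjoint separators `S₁, S₂ ⊆ Q` both have
a full component `C₁, C₂` to the right of `p`. A vertex of `S₂` whose interval reaches a vertex
of `C₁` would be adjacent to it, hence lie in `C₁`; so intervals of `S₂` end before those of `C₁`
begin, and symmetrically. An edge from `S₁` to `C₁` and one from `S₂` to `C₂` then contradict
each other, so each side of `p` carries at most one separator.
-/

namespace SimpleGraph

open Set

variable {V : Type*} {G : SimpleGraph V}

section Separators

variable {S T : Set V} {u v x y : V}

/-- The vertex set of the component of `u` in `G - S`. -/
def reachAvoiding (G : SimpleGraph V) (S : Set V) (u : V) : Set V :=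
  {x | ∃ w : G.Walk u x, ∀ y ∈ w.support, y ∉ S}

lemma mem_reachAvoiding_self (hu : u ∉ S) : u ∈ G.reachAvoiding S u :=
  ⟨.nil, by simpa using hu⟩

lemma not_mem_of_mem_reachAvoiding (hx : x ∈ G.reachAvoiding S u) : x ∉ S := by
  obtain ⟨w, hw⟩ := hx
  exact hw x w.end_mem_support

lemma mem_reachAvoiding_of_adj (hx : x ∈ G.reachAvoiding S u) (hxy : G.Adj x y) (hy : y ∉ S) :
    y ∈ G.reachAvoiding S u := by
  obtain ⟨w, hw⟩ := hx
  refine ⟨w.concat hxy, fun z hz => ?_⟩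
  rw [Walk.support_concat, List.mem_append, List.mem_singleton] at hz
  rcases hz with hz | rfl
  exacts [hw z hz, hy]

lemma reachAvoiding_subset (hu : u ∈ T) (hT : ∀ x ∈ T, ∀ y, G.Adj x y → y ∉ S → y ∈ T) :
    G.reachAvoiding S u ⊆ T := by
  rintro x ⟨w, hw⟩
  induction w with
  | nil => exact hu
  | cons h q ih =>
    simp only [Walk.support_cons, List.mem_cons, forall_eq_or_imp] at hw
    exact ih (hT _ hu _ h (hw.2 _ q.start_mem_support)) hw.2

lemma exists_adj_of_mem_reachAvoiding (hx : x ∈ G.reachAvoiding S u) (w : G.Walk x v)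
    (hw : ∃ y ∈ w.support, y ∈ S) :
    ∃ z ∈ G.reachAvoiding S u, ∃ y ∈ w.support, y ∈ S ∧ G.Adj z y := by
  induction w with
  | nil =>
    obtain ⟨y, hy, hyS⟩ := hw
    rw [Walk.support_nil, List.mem_singleton] at hy
    exact absurd (hy ▸ hyS) (not_mem_of_mem_reachAvoiding hx)
  | @cons x c v h q ih =>
    by_cases hc : c ∈ S
    · exact ⟨x, hx, c, by simp, hc, h⟩
    · have hq : ∃ y ∈ q.support, y ∈ S := by
        obtain ⟨y, hy, hyS⟩ := hw
        rw [Walk.support_cons, List.mem_cons] at hy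
        rcases hy with rfl | hy
        exacts [absurd hyS (not_mem_of_mem_reachAvoiding hx), ⟨y, hy, hyS⟩]
      obtain ⟨z, hz, y, hy, hyS, hzy⟩ := ih (mem_reachAvoiding_of_adj hx h hc) hq
      exact ⟨z, hz, y, by simp [hy], hyS, hzy⟩

lemma IsUVSeparator.symm (h : G.IsUVSeparator u v S) : G.IsUVSeparator v u S :=
  ⟨h.2.1, h.1, fun w => by simpa using h.2.2 w.reverse⟩

lemma IsUVSeparator.disjoint_reachAvoiding (h : G.IsUVSeparator u v S) :
    Disjoint (G.reachAvoiding S u) (G.reachAvoiding S v) := by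
  rw [Set.disjoint_left]
  rintro x ⟨w₁, h₁⟩ ⟨w₂, h₂⟩
  obtain ⟨y, hy, hyS⟩ := h.2.2 (w₁.append w₂.reverse)
  rw [Walk.mem_support_append_iff, Walk.support_reverse, List.mem_reverse] at hy
  rcases hy with hy | hy
  exacts [h₁ y hy hyS, h₂ y hy hyS]

lemma IsUVSeparator.exists_adj_of_not_isUVSeparator_diff {s : V} (h : G.IsUVSeparator u v S)
    (hs : s ∈ S) (hmin : ¬ G.IsUVSeparator u v (S \ {s})) :
    ∃ z ∈ G.reachAvoiding S u, G.Adj s z := by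
  obtain ⟨w, hw⟩ : ∃ w : G.Walk u v, ∀ y ∈ w.support, y ∉ S \ {s} := by
    by_contra! hsep
    exact hmin ⟨fun hu => h.1 hu.1, fun hv => h.2.1 hv.1, hsep⟩
  obtain ⟨z, hz, y, hy, hyS, hzy⟩ :=
    exists_adj_of_mem_reachAvoiding (mem_reachAvoiding_self h.1) w (h.2.2 w)
  obtain rfl : y = s := by_contra fun hne => hw y hy ⟨hyS, hne⟩
  exact ⟨z, hz, hzy.symm⟩

lemma IsMinVtxSep.exists_full_components (hS : G.IsMinVtxSep S) :
    ∃ u v, G.IsUVSeparator u v S ∧ (∀ s ∈ S, ∃ z ∈ G.reachAvoiding S u, G.Adj s z) ∧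
      ∀ s ∈ S, ∃ z ∈ G.reachAvoiding S v, G.Adj s z := by
  obtain ⟨u, v, -, -, hsep, hmin⟩ := hS
  refine ⟨u, v, hsep, fun s hs => ?_, fun s hs => ?_⟩
  · exact hsep.exists_adj_of_not_isUVSeparator_diff hs (hmin _ (sdiff_singleton_ssubset.2 hs))
  · exact hsep.symm.exists_adj_of_not_isUVSeparator_diff hs
      fun h => hmin _ (sdiff_singleton_ssubset.2 hs) h.symm

lemma IsMinVtxSep.nonempty (hconn : G.Connected) (hS : G.IsMinVtxSep S) : S.Nonempty := by
  obtain ⟨u, v, -, -, hsep, -⟩ := hS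
  obtain ⟨x, -, hx⟩ := hsep.2.2 (hconn.preconnected u v).some
  exact ⟨x, hx⟩

lemma IsClique.disjoint_reachAvoiding_or {K : Set V} (hK : G.IsClique K)
    (h : Disjoint (G.reachAvoiding S u) (G.reachAvoiding S v)) :
    Disjoint (G.reachAvoiding S u) K ∨ Disjoint (G.reachAvoiding S v) K := by
  by_contra! hK'
  obtain ⟨⟨x, hxu, hxK⟩, ⟨y, hyv, hyK⟩⟩ := And.imp not_disjoint_iff.1 not_disjoint_iff.1 hK'
  have hxy : x ≠ y := fun hxy => Set.disjoint_left.1 h hxu (hxy ▸ hyv)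
  exact Set.disjoint_left.1 h
    (mem_reachAvoiding_of_adj hxu (hK hxK hyK hxy) (not_mem_of_mem_reachAvoiding hyv)) hyv

end Separators

section IntervalModel

def IsIntervalModel (G : SimpleGraph V) (a b : V → ℝ) : Prop :=
  (∀ v, a v ≤ b v) ∧ ∀ u v, u ≠ v → (G.Adj u v ↔ a u ≤ b v ∧ a v ≤ b u)

lemma IsIntervalGraph.exists_isIntervalModel (h : G.IsIntervalGraph) :
    ∃ a b, G.IsIntervalModel a b := by
  obtain ⟨a, b, hab, hadj⟩ := h
  refine ⟨a, b, hab, fun u v huv => ?_⟩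
  rw [hadj u v huv, Icc_inter_Icc, nonempty_Icc, sup_le_iff, le_inf_iff, le_inf_iff]
  have := hab u
  have := hab v
  tauto

variable {a b : V → ℝ} {p : ℝ} {S K Q : Set V} {u v x y z : V}

/-- Reflecting the real line exchanges left and right. -/
lemma IsIntervalModel.neg (hm : G.IsIntervalModel a b) : G.IsIntervalModel (-b) (-a) :=
  ⟨fun v => neg_le_neg (hm.1 v), fun u v huv => by
    simp only [hm.2 u v huv, Pi.neg_apply, neg_le_neg_iff, and_comm]⟩

lemma IsIntervalModel.le_of_adj (hm : G.IsIntervalModel a b) (h : G.Adj u v) : a u ≤ b v :=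
  ((hm.2 u v h.ne).1 h).1

lemma IsIntervalModel.le_of_isClique (hm : G.IsIntervalModel a b) (hK : G.IsClique K)
    (hx : x ∈ K) (hy : y ∈ K) : a x ≤ b y := by
  rcases eq_or_ne x y with rfl | hxy
  exacts [hm.1 x, hm.le_of_adj (hK hx hy hxy)]

lemma IsIntervalModel.isClique_setOf (hm : G.IsIntervalModel a b) (p : ℝ) :
    G.IsClique {x | a x ≤ p ∧ p ≤ b x} := fun x hx y hy hxy =>
  (hm.2 x y hxy).2 ⟨hx.1.trans hy.2, hy.1.trans hx.2⟩

/-- Helly property of intervals: the point is the largest left endpoint. -/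
lemma IsIntervalModel.exists_eq_setOf_of_isMaxClique (hm : G.IsIntervalModel a b)
    (hQ : G.IsMaxClique Q) : ∃ p, Q = {x | a x ≤ p ∧ p ≤ b x} := by
  have hsub : Q ⊆ {x | a x ≤ sSup (a '' Q) ∧ sSup (a '' Q) ≤ b x} := by
    intro x hx
    constructor
    · refine le_csSup ⟨b x, ?_⟩ (mem_image_of_mem a hx)
      rintro _ ⟨y, hy, rfl⟩
      exact hm.le_of_isClique hQ.1 hy hx
    · refine csSup_le ⟨a x, mem_image_of_mem a hx⟩ ?_
      rintro _ ⟨y, hy, rfl⟩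
      exact hm.le_of_isClique hQ.1 hy hx
  exact ⟨_, (hQ.2 _ (hm.isClique_setOf _) hsub).symm⟩

def HasFullComponentRightOf (G : SimpleGraph V) (a : V → ℝ) (p : ℝ) (S : Set V) : Prop :=
  ∃ C : Set V, (∀ s ∈ S, ∃ z ∈ C, G.Adj s z) ∧ (∀ x ∈ C, ∀ y, G.Adj x y → y ∉ S → y ∈ C) ∧
    ∀ x ∈ C, p < a x

lemma IsIntervalModel.hasFullComponentRightOf (hm : G.IsIntervalModel a b) (hu : u ∉ S)
    (hfull : ∀ s ∈ S, ∃ z ∈ G.reachAvoiding S u, G.Adj s z)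
    (hQ : Disjoint (G.reachAvoiding S u) {x | a x ≤ p ∧ p ≤ b x}) (hpu : p < a u) :
    G.HasFullComponentRightOf a p S := by
  have hright : G.reachAvoiding S u ⊆ {x | x ∈ G.reachAvoiding S u ∧ p < a x} := by
    refine reachAvoiding_subset ⟨mem_reachAvoiding_self hu, hpu⟩ ?_
    rintro x ⟨hx, hpx⟩ y hxy hy
    have hy' := mem_reachAvoiding_of_adj hx hxy hy
    have hpy : p < b y := hpx.trans_le (hm.le_of_adj hxy)
    exact ⟨hy', not_le.1 fun hay => Set.disjoint_left.1 hQ hy' ⟨hay, hpy.le⟩⟩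
  exact ⟨_, hfull, fun x hx y => mem_reachAvoiding_of_adj hx, fun x hx => (hright hx).2⟩

lemma IsIntervalModel.hasFullComponentRightOf_or (hm : G.IsIntervalModel a b)
    (hS : G.IsMinVtxSep S) :
    G.HasFullComponentRightOf a p S ∨ G.HasFullComponentRightOf (-b) (-p) S := by
  obtain ⟨u, v, hsep, hfu, hfv⟩ := hS.exists_full_components
  have hside : ∀ w ∉ S, (∀ s ∈ S, ∃ z ∈ G.reachAvoiding S w, G.Adj s z) →
      Disjoint (G.reachAvoiding S w) {x | a x ≤ p ∧ p ≤ b x} →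
      G.HasFullComponentRightOf a p S ∨ G.HasFullComponentRightOf (-b) (-p) S := by
    intro w hw hfull hQ
    have hQ' : Disjoint (G.reachAvoiding S w) {x | (-b) x ≤ -p ∧ -p ≤ (-a) x} := by
      simpa only [Pi.neg_apply, neg_le_neg_iff, and_comm] using hQ
    have hwQ : ¬ (a w ≤ p ∧ p ≤ b w) := Set.disjoint_left.1 hQ (mem_reachAvoiding_self hw)
    rcases not_and_or.1 hwQ with hpw | hwp
    · exact .inl (hm.hasFullComponentRightOf hw hfull hQ (not_le.1 hpw))
    · exact .inr (hm.neg.hasFullComponentRightOf hw hfull hQ' (neg_lt_neg (not_le.1 hwp)))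
  rcases (hm.isClique_setOf p).disjoint_reachAvoiding_or hsep.disjoint_reachAvoiding with h | h
  exacts [hside u hsep.1 hfu h, hside v hsep.2.1 hfv h]

/-- Otherwise `y` would be adjacent to `z`, hence in `C`. -/
lemma IsIntervalModel.lt_of_mem_closed_right (hm : G.IsIntervalModel a b) {C : Set V}
    (hC : ∀ x ∈ C, ∀ y, G.Adj x y → y ∉ S → y ∈ C) (hCp : ∀ x ∈ C, p < a x)
    (hy : y ∉ S) (hyp : a y ≤ p) (hz : z ∈ C) : b y < a z := by
  by_contra! hzy
  have hyz : G.Adj z y :=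
    (hm.2 z y fun h => (hyp.trans_lt (h ▸ hCp z hz)).false).2
      ⟨hzy, hyp.trans ((hCp z hz).le.trans (hm.1 z))⟩
  exact (hyp.trans_lt (hCp y (hC z hz y hyz hy))).false

lemma IsIntervalModel.not_disjoint_of_hasFullComponentRightOf (hm : G.IsIntervalModel a b)
    {S₁ S₂ : Set V} (hne₁ : S₁.Nonempty) (hne₂ : S₂.Nonempty)
    (hp₁ : S₁ ⊆ {x | a x ≤ p}) (hp₂ : S₂ ⊆ {x | a x ≤ p})
    (h₁ : G.HasFullComponentRightOf a p S₁) (h₂ : G.HasFullComponentRightOf a p S₂) :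
    ¬ Disjoint S₁ S₂ := by
  intro hdisj
  obtain ⟨s₁, hs₁⟩ := hne₁
  obtain ⟨s₂, hs₂⟩ := hne₂
  obtain ⟨C₁, hfull₁, hC₁, hC₁p⟩ := h₁
  obtain ⟨C₂, hfull₂, hC₂, hC₂p⟩ := h₂
  obtain ⟨z₁, hz₁, hsz₁⟩ := hfull₁ s₁ hs₁
  obtain ⟨z₂, hz₂, hsz₂⟩ := hfull₂ s₂ hs₂
  have := hm.le_of_adj hsz₁.symm
  have := hm.le_of_adj hsz₂.symm
  have := hm.lt_of_mem_closed_right hC₂ hC₂p (Set.disjoint_left.1 hdisj hs₁) (hp₁ hs₁) hz₂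
  have := hm.lt_of_mem_closed_right hC₁ hC₁p (Set.disjoint_right.1 hdisj hs₂) (hp₂ hs₂) hz₁
  linarith

lemma IsIntervalModel.subsingleton_hasFullComponentRightOf (hm : G.IsIntervalModel a b)
    (hconn : G.Connected) (hsc : G.IsStrictlyChordal) (p : ℝ) :
    {S | G.IsMinVtxSep S ∧ S ⊆ {x | a x ≤ p} ∧ G.HasFullComponentRightOf a p S}.Subsingleton := by
  rintro S₁ ⟨hS₁, hp₁, h₁⟩ S₂ ⟨hS₂, hp₂, h₂⟩
  by_contra hne
  exact hm.not_disjoint_of_hasFullComponentRightOf (hS₁.nonempty hconn) (hS₂.nonempty hconn)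
    hp₁ hp₂ h₁ h₂ (hsc.2 S₁ S₂ hS₁ hS₂ hne)

end IntervalModel

end SimpleGraph

theorem maxClique_at_most_two_minVtxSep_general {V : Type*} (G : SimpleGraph V)
    (hconn : G.Connected)
    (hsc : G.IsStrictlyChordal) (hint : G.IsIntervalGraph)
    (Q : Set V) (hQ : G.IsMaxClique Q) :
    {S : Set V | G.IsMinVtxSep S ∧ S ⊆ Q}.encard ≤ 2 := by
  obtain ⟨a, b, hm⟩ := hint.exists_isIntervalModel
  obtain ⟨p, rfl⟩ := hm.exists_eq_setOf_of_isMaxClique hQ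
  have hsplit : {S | G.IsMinVtxSep S ∧ S ⊆ {x | a x ≤ p ∧ p ≤ b x}} ⊆
      {S | G.IsMinVtxSep S ∧ S ⊆ {x | a x ≤ p} ∧ G.HasFullComponentRightOf a p S} ∪
      {S | G.IsMinVtxSep S ∧ S ⊆ {x | (-b) x ≤ -p} ∧ G.HasFullComponentRightOf (-b) (-p) S} := by
    rintro S ⟨hS, hSQ⟩
    rcases hm.hasFullComponentRightOf_or hS with h | h
    · exact .inl ⟨hS, fun x hx => (hSQ hx).1, h⟩
    · exact .inr ⟨hS, fun x hx => neg_le_neg (hSQ hx).2, h⟩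
  calc _ ≤ _ := Set.encard_mono hsplit
    _ ≤ 1 + 1 := (Set.encard_union_le _ _).trans <| add_le_add
        (Set.encard_le_one_iff_subsingleton.2
          (hm.subsingleton_hasFullComponentRightOf hconn hsc p))
        (Set.encard_le_one_iff_subsingleton.2
          (hm.neg.subsingleton_hasFullComponentRightOf hconn hsc (-p)))
    _ = 2 := by norm_num

/-- In a finite connected non-complete strictly interval graph, every maximal clique
contains at most two minimal vertex separators. -/
theorem maxClique_at_most_two_minVtxSep {V : Type*} [Fintype V] (G : SimpleGraph V)
    (hconn : G.Connected) (hnc : ∃ u v : V, u ≠ v ∧ ¬ G.Adj u v)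
    (hsc : G.IsStrictlyChordal) (hint : G.IsIntervalGraph)
    (Q : Set V) (hQ : G.IsMaxClique Q) :
    {S : Set V | G.IsMinVtxSep S ∧ S ⊆ Q}.encard ≤ 2 :=
  maxClique_at_most_two_minVtxSep_general G hconn hsc hint Q hQ
end
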